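/- arXiv:1304.5427 — 2 statements merged into one kernel-verified Lean document; each statement's English description precedes it below -/
import Mathlib

section
/- (Star Colouring Theorem) Consider the Petersen-star configuration: vertices u_1,...,u_5 with inner edges (u_i, u_{i+2}) for i in Z/5 (a 5-cycle on the u_i in pentagram order), and five outer pendant edges f_1,...,f_5 where f_i is incident to u_i, each f_i's other endpoint having degree 1. In any proper 3-edge-colouring of this graph by non-zero elements of Z/2 × Z/2 in which the outer edge colours sum to 0, some colour x appears on exactly three of the outer edges f_1,...,f_5, and the three x-coloured outer edges are not three consecutive edges f_i, f_{i+1}, f_{i+2} (indices mod 5). -/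
/-!
Write `b i` for the colour of the inner edge `u i u (i + 2)`. The three edges at `u i` are the
inner edges coloured `b i` and `b (i + 3)` and the outer edge `u i v i`; in a proper colouring
by the three non-zero elements of `ZMod 2 × ZMod 2` they carry all three colours, so `u i v i`
is coloured `b i + b (i + 3)`. The inner colours form a proper colouring of the pentagram
(`b i ≠ b (i + 2)`), and a finite check over such `b` shows that the outer sequence
`b i + b (i + 3)` always has the required shape.
-/

/-- A proper edge colouring: distinct edges of the graph sharing a vertex get distinct colours. -/
def IsProperEdgeColoring {V C : Type*} (G : SimpleGraph V) (f : Sym2 V → C) : Prop :=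
  ∀ e₁ ∈ G.edgeSet, ∀ e₂ ∈ G.edgeSet, e₁ ≠ e₂ → (∃ v, v ∈ e₁ ∧ v ∈ e₂) → f e₁ ≠ f e₂

lemma ZMod.two_prod_eq_add_of_ne {x y z : ZMod 2 × ZMod 2} (hx : x ≠ 0) (hy : y ≠ 0) (hz : z ≠ 0)
    (hxy : x ≠ y) (hxz : x ≠ z) (hyz : y ≠ z) : z = x + y := by
  revert x y z; decide

namespace IsProperEdgeColoring

variable {V C : Type*} {G : SimpleGraph V} {f : Sym2 V → C} {w : V} {e₁ e₂ e₃ : Sym2 V}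

lemma ne_of_mem_incidenceSet (hf : IsProperEdgeColoring G f) (h₁ : e₁ ∈ G.incidenceSet w)
    (h₂ : e₂ ∈ G.incidenceSet w) (h : e₁ ≠ e₂) : f e₁ ≠ f e₂ :=
  hf e₁ h₁.1 e₂ h₂.1 h ⟨w, h₁.2, h₂.2⟩

lemma eq_add_of_mem_incidenceSet {f : Sym2 V → ZMod 2 × ZMod 2} (hf : IsProperEdgeColoring G f)
    (hnz : ∀ e ∈ G.edgeSet, f e ≠ 0) (h₁ : e₁ ∈ G.incidenceSet w) (h₂ : e₂ ∈ G.incidenceSet w)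
    (h₃ : e₃ ∈ G.incidenceSet w) (h₁₂ : e₁ ≠ e₂) (h₁₃ : e₁ ≠ e₃) (h₂₃ : e₂ ≠ e₃) :
    f e₃ = f e₁ + f e₂ :=
  ZMod.two_prod_eq_add_of_ne (hnz _ h₁.1) (hnz _ h₂.1) (hnz _ h₃.1)
    (hf.ne_of_mem_incidenceSet h₁ h₂ h₁₂) (hf.ne_of_mem_incidenceSet h₁ h₃ h₁₃)
    (hf.ne_of_mem_incidenceSet h₂ h₃ h₂₃)

end IsProperEdgeColoring

lemma pentagram_edge_injective {V : Type*} {u : Fin 5 → V} (hu : Function.Injective u) :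
    Function.Injective fun i : Fin 5 => s(u i, u (i + 2)) := by
  intro i j h
  simp only [Sym2.eq_iff, hu.eq_iff] at h
  rcases h with ⟨h, -⟩ | ⟨rfl, h⟩
  · exact h
  · revert j; decide

def IsStarPattern (a : Fin 5 → ZMod 2 × ZMod 2) : Prop :=
  ∃ x : ZMod 2 × ZMod 2, x ≠ 0 ∧
    (Finset.univ.filter (fun i => a i = x)).card = 3 ∧
    ¬ ∃ i : Fin 5, a i = x ∧ a (i + 1) = x ∧ a (i + 2) = x

lemma isStarPattern_of_pentagram (b : Fin 5 → ZMod 2 × ZMod 2) (h0 : ∀ i, b i ≠ 0)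
    (hb : ∀ i, b i ≠ b (i + 2)) : IsStarPattern fun i => b i + b (i + 3) := by
  have hvec : b = ![b 0, b 1, b 2, b 3, b 4] := by
    funext i; fin_cases i <;> rfl
  rw [hvec] at h0 hb ⊢
  generalize b 0 = b₀, b 1 = b₁, b 2 = b₂, b 3 = b₃, b 4 = b₄ at h0 hb ⊢
  revert b₀ b₁ b₂ b₃ b₄
  unfold IsStarPattern
  decide

theorem stmt7_general {V : Type*} (G : SimpleGraph V)
    (u v : Fin 5 → V) (hu : Function.Injective u)
    (huv : ∀ i j, u i ≠ v j)
    (hinner : ∀ i, G.Adj (u i) (u (i + 2)))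
    (houter : ∀ i, G.Adj (u i) (v i))
    (f : Sym2 V → ZMod 2 × ZMod 2) (hf : IsProperEdgeColoring G f)
    (hnz : ∀ e ∈ G.edgeSet, f e ≠ 0) :
    ∃ x : ZMod 2 × ZMod 2, x ≠ 0 ∧
      (Finset.univ.filter (fun i => f s(u i, v i) = x)).card = 3 ∧
      ¬ ∃ i : Fin 5, f s(u i, v i) = x ∧ f s(u (i + 1), v (i + 1)) = x ∧
        f s(u (i + 2), v (i + 2)) = x := by
  have hback (i : Fin 5) : i + 3 + 2 = i := by rw [add_assoc]; exact add_eq_left.mpr rfl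
  have hinner_ne_outer (i j k : Fin 5) : s(u i, u j) ≠ s(u k, v k) := fun h =>
    (Sym2.mem_iff.mp (h.symm ▸ Sym2.mem_mk_right (u k) (v k))).elim
      (huv _ _ ∘ Eq.symm) (huv _ _ ∘ Eq.symm)
  have hb (i : Fin 5) : f s(u i, u (i + 2)) ≠ f s(u (i + 2), u (i + 2 + 2)) :=
    hf.ne_of_mem_incidenceSet (G.mk'_mem_incidenceSet_right_iff.mpr (hinner i))
      (G.mk'_mem_incidenceSet_left_iff.mpr (hinner (i + 2)))
      ((pentagram_edge_injective hu).ne (by revert i; decide))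
  have houter_eq (i : Fin 5) :
      f s(u i, v i) = f s(u i, u (i + 2)) + f s(u (i + 3), u (i + 3 + 2)) := by
    have hne : s(u i, u (i + 2)) ≠ s(u (i + 3), u (i + 3 + 2)) :=
      (pentagram_edge_injective hu).ne (by revert i; decide)
    have hprev := G.mk'_mem_incidenceSet_right_iff.mpr (hinner (i + 3))
    rw [hback] at hprev hne ⊢
    exact hf.eq_add_of_mem_incidenceSet hnz (G.mk'_mem_incidenceSet_left_iff.mpr (hinner i)) hprev
      (G.mk'_mem_incidenceSet_left_iff.mpr (houter i)) hne
      (hinner_ne_outer _ _ _) (hinner_ne_outer _ _ _)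
  have hpattern := isStarPattern_of_pentagram (fun i => f s(u i, u (i + 2)))
    (fun i => hnz _ (hinner i)) hb
  rwa [← funext houter_eq] at hpattern

theorem stmt7 {V : Type*} [Fintype V] [DecidableEq V] (G : SimpleGraph V) [DecidableRel G.Adj]
    (u v : Fin 5 → V) (hu : Function.Injective u) (hv : Function.Injective v)
    (huv : ∀ i j, u i ≠ v j)
    (hinner : ∀ i, G.Adj (u i) (u (i + 2)))
    (houter : ∀ i, G.Adj (u i) (v i))
    (hdegu : ∀ i, G.degree (u i) = 3)
    (hdegv : ∀ i, G.degree (v i) = 1)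
    (f : Sym2 V → ZMod 2 × ZMod 2) (hf : IsProperEdgeColoring G f)
    (hnz : ∀ e ∈ G.edgeSet, f e ≠ 0)
    (hsum : ∑ i, f s(u i, v i) = 0) :
    ∃ x : ZMod 2 × ZMod 2, x ≠ 0 ∧
      (Finset.univ.filter (fun i => f s(u i, v i) = x)).card = 3 ∧
      ¬ ∃ i : Fin 5, f s(u i, v i) = x ∧ f s(u (i + 1), v (i + 1)) = x ∧
        f s(u (i + 2), v (i + 2)) = x :=
  stmt7_general G u v hu huv hinner houter f hf hnz
end

section
/- In a finite simple cubic graph that is cyclically 5-edge-connected, any 5-cycle Q and any hinge H (path with 2 edges) disjoint from Q are 5-edge-connected to each other: there exist five pairwise edge-disjoint paths each with one endpoint in Q and the other in H; equivalently, no set of at most 4 edges separates Q from H. -/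
/-- `S` separates the vertex sets `A` and `B` in `G`: after deleting the edges of `S`,
`A` lies entirely in one component, `B` lies entirely in one component, and these
components are different. -/
def SeparatedBy {V : Type*} (G : SimpleGraph V) (A B : Set V) (S : Set (Sym2 V)) : Prop :=
  (∀ a ∈ A, ∀ b ∈ B, ¬ (G.deleteEdges S).Reachable a b) ∧
  (∀ a ∈ A, ∀ a' ∈ A, (G.deleteEdges S).Reachable a a') ∧
  (∀ b ∈ B, ∀ b' ∈ B, (G.deleteEdges S).Reachable b b')

/-- `G` is cyclically 5-edge-connected: no two vertex-disjoint cycles can be separated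
from each other by removing at most 4 edges. -/
def CyclicallyFiveEdgeConnected {V : Type*} (G : SimpleGraph V) : Prop :=
  ∀ (a b : V) (A : G.Walk a a) (B : G.Walk b b), A.IsCycle → B.IsCycle →
    (∀ w, w ∈ A.support → w ∉ B.support) →
    ∀ S : Finset (Sym2 V), S.card ≤ 4 →
      ¬ SeparatedBy G {w | w ∈ A.support} {w | w ∈ B.support} ↑S

/-! If `S` separated `Q` from the hinge, let `C` be the component of `G - S` containing the
hinge. Every edge of `G` leaving `C` lies in `S`, so the degrees of the connected induced graph
`G[C]` sum to at least `3|C| - |S| ≥ 3|C| - 4`. A tree on `|C| ≥ 3` vertices has degree sum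
`2|C| - 2`, which is smaller, so `G[C]` contains a cycle. That cycle is disjoint from `Q` and `S`
separates the two, contradicting cyclic 5-edge-connectivity. -/

open Finset

namespace SimpleGraph

variable {V : Type*} {G : SimpleGraph V}

lemma exists_isCycle_subset_of_not_isAcyclic_induce {s : Set V}
    (h : ¬ (G.induce s).IsAcyclic) :
    ∃ (u : V) (c : G.Walk u u), c.IsCycle ∧ ∀ w ∈ c.support, w ∈ s := by
  simp only [IsAcyclic, not_forall, not_not] at h
  obtain ⟨u, c, hc⟩ := h
  let f := Embedding.induce (G := G) s
  refine ⟨f u, c.map f.toHom, hc.map f.injective, ?_⟩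
  simp only [Walk.support_map, List.mem_map]
  rintro _ ⟨w, -, rfl⟩
  exact w.2

section

variable [Fintype V] [DecidableEq V] [DecidableRel G.Adj]

lemma degree_induce_add_card_neighborFinset_sdiff {K : Finset V} {v : V} (hv : v ∈ K) :
    (G.induce (K : Set V)).degree ⟨v, hv⟩ + #(G.neighborFinset v \ K) = G.degree v := by
  have hinduce : (G.induce (K : Set V)).degree ⟨v, hv⟩ = #(G.neighborFinset v ∩ K) := by
    rw [← card_neighborFinset_eq_degree]
    refine card_nbij (↑) ?_ (fun _ _ _ _ h => Subtype.ext h) ?_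
    · intro w hw
      simp_all
    · intro w hw
      simp only [coe_inter, Set.mem_inter_iff, mem_coe, mem_neighborFinset] at hw
      exact ⟨⟨w, hw.2⟩, by simpa using hw.1, rfl⟩
  rw [hinduce, card_inter_add_card_sdiff, card_neighborFinset_eq_degree]

lemma sum_card_neighborFinset_sdiff_le {K : Finset V} {S : Finset (Sym2 V)}
    (hS : ∀ v ∈ K, ∀ w ∉ K, G.Adj v w → s(v, w) ∈ S) :
    ∑ v ∈ K, #(G.neighborFinset v \ K) ≤ #S := by
  rw [← card_sigma]
  refine card_le_card_of_injOn (fun d => s(d.1, d.2)) ?_ ?_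
  · rintro ⟨v, w⟩ h
    simp only [coe_sigma, Set.mem_sigma_iff, mem_coe, mem_sdiff, mem_neighborFinset] at h
    exact hS v h.1 w h.2.2 h.2.1
  · rintro ⟨v, w⟩ h ⟨v', w'⟩ h' heq
    simp only [coe_sigma, Set.mem_sigma_iff, mem_coe, mem_sdiff] at h h'
    rcases Sym2.eq_iff.mp heq with ⟨rfl, rfl⟩ | ⟨rfl, rfl⟩
    · rfl
    · exact absurd h.1 h'.2.2

theorem not_isAcyclic_induce_of_sum_card_neighborFinset_sdiff_lt {K : Finset V}
    (hdeg : ∀ v ∈ K, 3 ≤ G.degree v)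
    (hconn : (G.induce (K : Set V)).Connected)
    (hout : ∑ v ∈ K, #(G.neighborFinset v \ K) < #K + 2) :
    ¬ (G.induce (K : Set V)).IsAcyclic := by
  intro hacyc
  have hedges := IsTree.card_edgeFinset ⟨hconn, hacyc⟩
  have hsum := (G.induce (K : Set V)).sum_degrees_eq_twice_card_edges
  have hsplit : ∑ v : (K : Set V), (G.induce (K : Set V)).degree v
      + ∑ v ∈ K, #(G.neighborFinset v \ K) = ∑ v ∈ K, G.degree v := by
    rw [← sum_coe_sort K, ← sum_coe_sort K]
    exact sum_add_distrib.symm.trans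
      (sum_congr rfl fun v _ => degree_induce_add_card_neighborFinset_sdiff v.2)
  have hlow : 3 * #K ≤ ∑ v ∈ K, G.degree v := by
    simpa [mul_comm] using card_nsmul_le_sum K _ 3 hdeg
  simp only [coe_sort_coe, Fintype.card_coe] at hedges
  omega

end

variable [Fintype V] [DecidableRel G.Adj]

theorem exists_isCycle_subset_supp_of_card_lt {S : Finset (Sym2 V)} (hdeg : ∀ v, 3 ≤ G.degree v)
    (C : (G.deleteEdges S).ConnectedComponent) (hC : #S < C.supp.ncard + 2) :
    ∃ (u : V) (c : G.Walk u u), c.IsCycle ∧ ∀ w ∈ c.support, w ∈ C.supp := by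
  classical
  set K := C.supp.toFinset
  have hK : (K : Set V) = C.supp := Set.coe_toFinset _
  have hconn : (G.induce (K : Set V)).Connected := by
    rw [hK]
    exact C.connected_toSimpleGraph.mono (comap_monotone _ (deleteEdges_le _))
  have hleave : ∀ v ∈ K, ∀ w ∉ K, G.Adj v w → s(v, w) ∈ S := by
    intro v hv w hw hvw
    by_contra hvwS
    simp only [K, Set.mem_toFinset] at hv hw
    exact hw (C.mem_supp_of_adj_mem_supp hv (deleteEdges_adj.mpr ⟨hvw, hvwS⟩))
  rw [Set.ncard_eq_toFinset_card'] at hC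
  simpa only [hK] using exists_isCycle_subset_of_not_isAcyclic_induce <|
    not_isAcyclic_induce_of_sum_card_neighborFinset_sdiff_lt (fun v _ => hdeg v) hconn
      ((sum_card_neighborFinset_sdiff_le hleave).trans_lt hC)

end SimpleGraph

theorem stmt16_general {V : Type*} [Fintype V] (G : SimpleGraph V) [DecidableRel G.Adj]
    (hcubic : ∀ v, G.degree v = 3) (hc5 : CyclicallyFiveEdgeConnected G)
    (q : V) (Q : G.Walk q q) (hQ : Q.IsCycle)
    (v₁ v₂ v₃ : V) (h12 : G.Adj v₁ v₂) (h23 : G.Adj v₂ v₃) (h13 : v₁ ≠ v₃) :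
    ∀ S : Finset (Sym2 V), S.card ≤ 4 →
      ¬ SeparatedBy G {w | w ∈ Q.support} {v₁, v₂, v₃} ↑S := by
  classical
  rintro S hS ⟨hQH, hQQ, hHH⟩
  set C := (G.deleteEdges S).connectedComponentMk v₂
  have hC : ∀ x, x ∈ C.supp ↔ (G.deleteEdges S).Reachable x v₂ := fun x =>
    (C.mem_supp_iff x).trans SimpleGraph.ConnectedComponent.eq
  have hHC : {v₁, v₂, v₃} ⊆ C.supp := fun x hx => (hC x).mpr (hHH x hx v₂ (by simp))
  have hcard : 3 ≤ C.supp.ncard := by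
    rw [← Set.ncard_eq_three.mpr ⟨v₁, v₂, v₃, h12.ne, h13, h23.ne, rfl⟩]
    exact Set.ncard_le_ncard hHC
  obtain ⟨u, c, hc, hcC⟩ :=
    SimpleGraph.exists_isCycle_subset_supp_of_card_lt (fun v => (hcubic v).ge) C (by omega)
  have hQC : ∀ a ∈ Q.support, a ∉ C.supp := fun a ha haC =>
    hQH a ha v₂ (by simp) ((hC a).mp haC)
  refine hc5 q u Q c hQ hc (fun w hw hwc => hQC w hw (hcC w hwc)) S hS ⟨?_, hQQ, ?_⟩
  · intro a ha b hb hab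
    exact hQC a ha ((hC a).mpr (hab.trans ((hC b).mp (hcC b hb))))
  · intro b hb b' hb'
    exact ((hC b).mp (hcC b hb)).trans ((hC b').mp (hcC b' hb')).symm

theorem stmt16 {V : Type*} [Fintype V] (G : SimpleGraph V) [DecidableRel G.Adj]
    (hcubic : ∀ v, G.degree v = 3) (hc5 : CyclicallyFiveEdgeConnected G)
    (q : V) (Q : G.Walk q q) (hQ : Q.IsCycle) (hQ5 : Q.length = 5)
    (v₁ v₂ v₃ : V) (h12 : G.Adj v₁ v₂) (h23 : G.Adj v₂ v₃) (h13 : v₁ ≠ v₃)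
    (hd1 : v₁ ∉ Q.support) (hd2 : v₂ ∉ Q.support) (hd3 : v₃ ∉ Q.support) :
    ∀ S : Finset (Sym2 V), S.card ≤ 4 →
      ¬ SeparatedBy G {w | w ∈ Q.support} {v₁, v₂, v₃} ↑S :=
  stmt16_general G hcubic hc5 q Q hQ v₁ v₂ v₃ h12 h23 h13
end
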